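/- The p-basic derivation ∂_p, defined by (∂_p f)(n) = f(np)·v_p(np), is a derivation of the ring of arithmetic functions under Dirichlet convolution, and its kernel consists exactly of the arithmetic functions f such that f vanishes on all multiples of p (equivalently, p does not divide any element of the support of f). -/

import Mathlib

open ArithmeticFunction
open scoped Classical

/-- The embedding of `ℂ` into the Dirichlet ring of arithmetic functions,
sending `c` to the function with value `c` at `1` and `0` elsewhere. -/
noncomputable def CC : ℂ →+* ArithmeticFunction ℂ where
  toFun c := ⟨fun n => if n = 1 then c else 0, by simp⟩
  map_zero' := by ext n; simp
  map_one' := by ext n; simp [ArithmeticFunction.one_apply]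
  map_add' a b := by ext n; erw [ArithmeticFunction.add_apply]; by_cases h : n = 1 <;> simp [h]
  map_mul' a b := by
    ext n
    erw [ArithmeticFunction.mul_apply]
    by_cases h : n = 1
    · subst h
      rw [show Nat.divisorsAntidiagonal 1 = {(1,1)} from rfl]
      simp
    · rw [Finset.sum_eq_zero]
      · simp [h]
      · rintro ⟨d, e⟩ hde
        rw [Nat.mem_divisorsAntidiagonal] at hde
        rcases Decidable.eq_or_ne d 1 with hd | hd
        · have : e ≠ 1 := by rintro rfl; exact h (by simp [← hde.1, hd])
          simp [this]
        · simp [hd]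

/-- The order `v f` of an arithmetic function: the least element of the support
(`sInf` of the empty set is `0` for `f = 0`; that case is always excluded by hypotheses). -/
noncomputable def ordN (f : ArithmeticFunction ℂ) : ℕ := sInf {n : ℕ | f n ≠ 0}

/-- The order as an extended natural number, `⊤` for `f = 0`. -/
noncomputable def ordE (f : ArithmeticFunction ℂ) : ℕ∞ :=
  sInf ((fun n : ℕ => (n : ℕ∞)) '' {n : ℕ | f n ≠ 0})

/-- The norm `‖f‖ = 1/v(f)`, with `1/∞ = 0`. -/
noncomputable def nrm (f : ArithmeticFunction ℂ) : ℝ :=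
  if f = 0 then 0 else 1 / (ordN f : ℝ)

/-- Extension of an arithmetic function to `ℝ`, vanishing off `ℕ`. -/
noncomputable def extR (f : ArithmeticFunction ℂ) (x : ℝ) : ℂ :=
  if h : ∃ n : ℕ, (n : ℝ) = x then f h.choose else 0

/-- The exponential map `Exp f = exp(f 1) * ∑ (f - f 1)^k / k!` of the Dirichlet ring.
Since `(f - f 1)^k` has order `≥ 2^k`, the value of the infinite series at `n` equals the
value of the partial sum up to `k = n`. -/
noncomputable def ExpA (f : ArithmeticFunction ℂ) : ArithmeticFunction ℂ :=
  ⟨fun n => Complex.exp (f 1) *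
      ((∑ k ∈ Finset.range (n + 1),
        CC ((Nat.factorial k : ℂ)⁻¹) * (f - CC (f 1)) ^ k) n), by simp⟩

/-- The `p`-basic derivation `(∂_p f) n = v_p (n p) • f (n p)`. -/
noncomputable def DP (p : ℕ) (f : ArithmeticFunction ℂ) : ArithmeticFunction ℂ :=
  ⟨fun n => (padicValNat p (n * p) : ℂ) * f (n * p), by simp⟩

/-- The log-derivation `(∂_L f) n = log n * f n`. -/
noncomputable def DL (f : ArithmeticFunction ℂ) : ArithmeticFunction ℂ :=
  ⟨fun n => (Real.log n : ℂ) * f n, by simp⟩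

/-- The pointwise multiplication operator `𝔪_g`. -/
noncomputable def MG (g f : ArithmeticFunction ℂ) : ArithmeticFunction ℂ :=
  ⟨fun n => g n * f n, by simp⟩

/-- Integer powers `𝔪_g^i` of the pointwise multiplication operator:
`(𝔪_g^i f) n = (g n)^i * f n`. -/
noncomputable def MGi (g : ArithmeticFunction ℂ) (i : ℤ) (f : ArithmeticFunction ℂ) :
    ArithmeticFunction ℂ := ⟨fun n => g n ^ i * f n, by simp⟩

/-- `D` is a (ℂ-linear) derivation of the ring of arithmetic functions
under Dirichlet convolution. -/
def IsDerivationA (D : ArithmeticFunction ℂ → ArithmeticFunction ℂ) : Prop :=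
  (∀ f g, D (f + g) = D f + D g) ∧
  (∀ (c : ℂ) (f), D (CC c * f) = CC c * D f) ∧
  (∀ f g, D (f * g) = D f * g + f * D g)

/-- Convergence of a sequence of arithmetic functions in the norm topology. -/
def TendstoA (s : ℕ → ArithmeticFunction ℂ) (l : ArithmeticFunction ℂ) : Prop :=
  Filter.Tendsto (fun m => nrm (s m - l)) Filter.atTop (nhds 0)

/-- (Sequential) continuity of a map in the norm topology, which for this
ultrametric is equivalent to continuity. -/
def ContinuousA (D : ArithmeticFunction ℂ → ArithmeticFunction ℂ) : Prop :=
  ∀ (s : ℕ → ArithmeticFunction ℂ) (l), TendstoA s l → TendstoA (fun m => D (s m)) (D l)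

/-- The indicator function `e_m` of the singleton `{m}`. -/
noncomputable def En (m : ℕ) : ArithmeticFunction ℂ :=
  ⟨fun n => if 0 < n ∧ n = m then 1 else 0, by simp⟩

/-- The constant one arithmetic function `𝟙`. -/
noncomputable def OneA : ArithmeticFunction ℂ := ⟨fun n => if n = 0 then 0 else 1, by simp⟩

/-- The ℂ-algebra structure of the ring of arithmetic functions, via `CC`. -/
noncomputable instance : Algebra ℂ (ArithmeticFunction ℂ) := CC.toAlgebra

/-!
Write `∂_p f` as the dilation `n ↦ g (n p)` of `g = v_p · f`. Pointwise multiplication by the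
completely additive `v_p` is a derivation of the Dirichlet ring, since `v_p(ab) = v_p(a) + v_p(b)`
on each term `f(a) g(b)` of a convolution. Dilation by `p` commutes with convolution on the right
as soon as the left factor is supported on multiples of `p`: the divisors of `np` that are
multiples of `p` are exactly the `ap` with `a ∣ n`. Since `v_p · f` is supported on multiples of
`p`, the two facts combine into the Leibniz rule. For the kernel, `v_p(np) ≥ 1` whenever `n ≥ 1`.
-/

namespace ArithmeticFunction

variable {R : Type*}

def dilate [Zero R] (k : ℕ) (f : ArithmeticFunction R) : ArithmeticFunction R :=
  ⟨fun n => f (n * k), by simp⟩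

@[simp]
lemma dilate_apply [Zero R] (k n : ℕ) (f : ArithmeticFunction R) : dilate k f n = f (n * k) := rfl

lemma dilate_add [AddMonoid R] (k : ℕ) (f g : ArithmeticFunction R) :
    dilate k (f + g) = dilate k f + dilate k g := by
  ext n; simp

lemma dilate_mul_of_dvd_of_ne_zero [Semiring R] {k : ℕ} {f : ArithmeticFunction R}
    (hf : ∀ a, f a ≠ 0 → k ∣ a) (g : ArithmeticFunction R) :
    dilate k (f * g) = dilate k f * g := by
  ext n
  rcases eq_or_ne (n * k) 0 with hnk | hnk
  · rcases mul_eq_zero.mp hnk with rfl | rfl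
    · simp
    · have : dilate 0 f = 0 := by ext; simp
      simp [this]
  simp only [dilate_apply, mul_apply]
  refine (Finset.sum_of_injOn (fun x : ℕ × ℕ => (x.1 * k, x.2)) ?_ ?_ ?_ fun _ _ => rfl).symm
  · rintro ⟨a, b⟩ - ⟨c, d⟩ - h
    simp_all
  · rintro ⟨a, b⟩ hab
    rw [Finset.mem_coe, Nat.mem_divisorsAntidiagonal] at hab ⊢
    exact ⟨by rw [← hab.1]; ring, hnk⟩
  · rintro ⟨a, b⟩ hab him
    by_contra hne
    obtain ⟨c, rfl⟩ := hf a (left_ne_zero_of_mul hne)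
    refine him ⟨(c, b), ?_, by simp [mul_comm]⟩
    rw [Nat.mem_divisorsAntidiagonal] at hab
    rw [Finset.mem_coe, Nat.mem_divisorsAntidiagonal]
    refine ⟨Nat.eq_of_mul_eq_mul_right (Nat.pos_of_ne_zero (right_ne_zero_of_mul hnk)) ?_,
      left_ne_zero_of_mul hnk⟩
    rw [← hab.1]; ring

def padicVal [AddMonoidWithOne R] (p : ℕ) : ArithmeticFunction R :=
  ⟨fun n => padicValNat p n, by simp⟩

@[simp]
lemma padicVal_apply [AddMonoidWithOne R] (p n : ℕ) : padicVal (R := R) p n = padicValNat p n :=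
  rfl

lemma padicVal_mul [AddMonoidWithOne R] {p : ℕ} [Fact p.Prime] {a b : ℕ} (ha : a ≠ 0)
    (hb : b ≠ 0) : padicVal (R := R) p (a * b) = padicVal p a + padicVal p b := by
  simp [padicValNat.mul ha hb]

lemma pmul_mul_of_map_mul [CommSemiring R] {w : ArithmeticFunction R}
    (hw : ∀ a b, a ≠ 0 → b ≠ 0 → w (a * b) = w a + w b) (f g : ArithmeticFunction R) :
    w.pmul (f * g) = w.pmul f * g + f * w.pmul g := by
  ext n
  simp only [pmul_apply, mul_apply, add_apply, Finset.mul_sum, ← Finset.sum_add_distrib]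
  refine Finset.sum_congr rfl fun ⟨a, b⟩ hab => ?_
  obtain ⟨rfl, hn⟩ := Nat.mem_divisorsAntidiagonal.mp hab
  rw [hw a b (left_ne_zero_of_mul hn) (right_ne_zero_of_mul hn)]
  ring

end ArithmeticFunction

lemma CC_apply (c : ℂ) (n : ℕ) : CC c n = if n = 1 then c else 0 :=
  rfl

lemma CC_mul_apply (c : ℂ) (f : ArithmeticFunction ℂ) (n : ℕ) : (CC c * f) n = c * f n := by
  rcases eq_or_ne n 0 with rfl | hn
  · simp
  rw [mul_apply, Nat.sum_divisorsAntidiagonal (fun a b => CC c a * f b)]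
  simp [CC_apply, ite_mul, hn]

lemma DP_eq_dilate_pmul (p : ℕ) (f : ArithmeticFunction ℂ) :
    DP p f = dilate p ((padicVal p).pmul f) :=
  rfl

lemma DP_add (p : ℕ) (f g : ArithmeticFunction ℂ) : DP p (f + g) = DP p f + DP p g := by
  ext n
  simp [DP_eq_dilate_pmul, pmul_apply, mul_add]

lemma DP_CC_mul (p : ℕ) (c : ℂ) (f : ArithmeticFunction ℂ) : DP p (CC c * f) = CC c * DP p f := by
  ext n
  simp only [CC_mul_apply, DP_eq_dilate_pmul, dilate_apply, pmul_apply]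
  ring

lemma DP_mul {p : ℕ} (hp : p.Prime) (f g : ArithmeticFunction ℂ) :
    DP p (f * g) = DP p f * g + f * DP p g := by
  have : Fact p.Prime := ⟨hp⟩
  have hsupp (h : ArithmeticFunction ℂ) (a : ℕ) (ha : (padicVal p).pmul h a ≠ 0) : p ∣ a := by
    by_contra hpa
    simp [pmul_apply, padicValNat.eq_zero_of_not_dvd hpa] at ha
  simp only [DP_eq_dilate_pmul]
  rw [pmul_mul_of_map_mul fun _ _ => padicVal_mul, dilate_add, dilate_mul_of_dvd_of_ne_zero (hsupp f),
    mul_comm f ((padicVal p).pmul g), dilate_mul_of_dvd_of_ne_zero (hsupp g), mul_comm f]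

lemma DP_eq_zero_iff {p : ℕ} (hp : p.Prime) (f : ArithmeticFunction ℂ) :
    DP p f = 0 ↔ ∀ n, p ∣ n → f n = 0 := by
  have : Fact p.Prime := ⟨hp⟩
  refine ⟨fun h n hpn => ?_, fun h => ?_⟩
  · obtain ⟨m, rfl⟩ := hpn
    rcases eq_or_ne m 0 with rfl | hm
    · simp
    have hv : padicValNat p (m * p) ≠ 0 := Nat.one_le_iff_ne_zero.mp <|
      one_le_padicValNat_of_dvd (mul_ne_zero hm hp.ne_zero) (dvd_mul_left p m)
    have hDm : DP p f m = 0 := by rw [h, ArithmeticFunction.zero_apply]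
    simpa [DP, hv, mul_comm p m] using hDm
  · ext n
    simp [DP, h (n * p) (dvd_mul_left p n)]

/-- The `p`-basic derivation `∂_p` is a derivation of the Dirichlet convolution ring,
and its kernel consists exactly of the functions vanishing on all multiples of `p`. -/
theorem stmt10 (p : ℕ) (hp : p.Prime) :
    IsDerivationA (DP p) ∧
    (∀ f : ArithmeticFunction ℂ, DP p f = 0 ↔ ∀ n : ℕ, p ∣ n → f n = 0) :=
  ⟨⟨DP_add p, DP_CC_mul p, DP_mul hp⟩, DP_eq_zero_iff hp⟩
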